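/- arXiv:2402.14077 — 3 statements merged into one kernel-verified Lean document; each statement's English description precedes it below -/
import Mathlib

section
/- Let V be a finite type and let r : V → V → Prop be a directed graph on V. Then r is acyclic (no vertex v satisfies Relation.TransGen r v v) if and only if there exists an edge-labeling g : V → V → ℕ such that for all u, v, w with r u v and r v w one has g u v < g v w (i.e., at every vertex, the label of every incoming edge is strictly less than the label of every outgoing edge). -/
/-- A finite digraph `r : V → V → Prop` is acyclic iff there is an edge labeling
`g : V → V → ℕ` such that at every vertex, the label of every incoming edge is
strictly less than the label of every outgoing edge. -/
theorem acyclic_iff_exists_edge_labeling {V : Type*} [Finite V] (r : V → V → Prop) :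
    (∀ v : V, ¬ Relation.TransGen r v v) ↔
      ∃ g : V → V → ℕ, ∀ u v w : V, r u v → r v w → g u v < g v w := by
  constructor
  · intro hac
    -- height function: number of vertices strictly below
    set f : V → ℕ := fun v => Set.ncard {x | Relation.TransGen r x v} with hf
    have key : ∀ u v, r u v → f u < f v := by
      intro u v huv
      apply Set.ncard_lt_ncard
      · constructor
        · intro x hx
          exact hx.tail huv
        · intro hsub
          exact hac u (hsub (Relation.TransGen.single huv))
      · exact Set.toFinite _
    exact ⟨fun u v => f v, fun u v w h1 h2 => key v w h2⟩
  · rintro ⟨g, hg⟩ v hv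
    -- along any path from a to b, the first edge's label bounds any edge out of b
    have claim : ∀ a b, Relation.TransGen r a b →
        ∀ c, r b c → ∃ x, r a x ∧ g a x < g b c := by
      intro a b h
      induction h with
      | single hab => exact fun c hbc => ⟨_, hab, hg _ _ _ hab hbc⟩
      | tail _ hbb' ih =>
        intro c hb'c
        obtain ⟨x, hax, hlt⟩ := ih _ hbb'
        exact ⟨x, hax, hlt.trans (hg _ _ _ hbb' hb'c)⟩
    cases hv with
    | single h => exact lt_irrefl _ (hg v v v h h)
    | tail htg huv =>
      obtain ⟨x, hvx, hlt⟩ := claim v _ htg v huv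
      exact absurd (hg _ v x huv hvx) (not_lt.2 hlt.le)
end

section
/- The lexicographic strict order List.Lex (· < ·) on lists of natural numbers — where α < β if and only if there is some k such that the first k entries of α and β coincide and either α has exactly k entries while β has more than k entries, or both lists have a (k+1)st entry and the (k+1)st entry of α is strictly less than that of β — is well-founded when restricted to lists that are sorted in non-increasing order. Equivalently, there is no infinite sequence L₀, L₁, L₂, … of lists of natural numbers, each sorted in non-increasing order, with L_{i+1} < L_i (in List.Lex (· < ·)) for every i. -/
/-!
Read as a multiset, a non-increasing list that is lexicographically smaller than another one is
obtained from it by keeping a common prefix and replacing the rest, which starts with a larger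
entry `b`, by entries all smaller than `b`. This is a step of the Dershowitz–Manna multiset
order, which is well-founded over any well-founded order.
-/

theorem List.Lex.isDershowitzMannaLT_coe {α : Type*} [Preorder α] {l l' : List α}
    (hl : l.Pairwise (· ≥ ·)) (h : List.Lex (· < ·) l l') :
    Multiset.IsDershowitzMannaLT (l : Multiset α) l' := by
  induction h with
  | @nil b l₂ =>
    exact ⟨0, 0, b :: l₂, by simp, by simp, by simp, by simp⟩
  | @cons a l₁ l₂ _ ih =>
    obtain ⟨X, Y, Z, hZ, hl₁, hl₂, hYZ⟩ := ih hl.of_cons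
    refine ⟨a ::ₘ X, Y, Z, hZ, ?_, ?_, hYZ⟩
    · rw [← Multiset.cons_coe, hl₁, Multiset.cons_add]
    · rw [← Multiset.cons_coe, hl₂, Multiset.cons_add]
  | @rel a l₁ b l₂ hab =>
    refine ⟨0, a :: l₁, b :: l₂, by simp, by simp, by simp, ?_⟩
    intro y hy
    have hya : y ≤ a := by
      rcases List.mem_cons.1 (Multiset.mem_coe.1 hy) with rfl | hy
      exacts [le_rfl, List.rel_of_pairwise_cons hl hy]
    exact ⟨b, by simp, hya.trans_lt hab⟩

/-- The lexicographic strict order on lists of naturals is well-founded when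
restricted to lists sorted in non-increasing order: there is no infinite
strictly descending sequence of non-increasing lists. -/
theorem lex_wf_on_nonincreasing_lists :
    ¬ ∃ L : ℕ → List ℕ,
        (∀ i, (L i).Pairwise (· ≥ ·)) ∧ (∀ i, List.Lex (· < ·) (L (i + 1)) (L i)) := by
  rintro ⟨L, hsorted, hlex⟩
  exact (wellFounded_iff_isEmpty_descending_chain.1 Multiset.wellFounded_isDershowitzMannaLT).false
    ⟨fun i => (L i : Multiset ℕ), fun i => (hlex i).isDershowitzMannaLT_coe (hsorted (i + 1))⟩
end

section
/- Let β₁, β₂ be lists of natural numbers and b a natural number such that β = β₁ ++ [b] ++ β₂ is sorted in non-increasing order. Let γ be any finite list of natural numbers each of whose entries is strictly less than b, and let α be the list obtained by sorting β₁ ++ γ ++ β₂ into non-increasing order. Then α is strictly smaller than β in the lexicographic order List.Lex (· < ·). -/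
/-!
A sorted list is determined by its multiset. Every entry of `β₁` dominates every entry of
`γ ++ β₂`, so the non-increasing rearrangement `α` of `β₁ ++ γ ++ β₂` still begins with `β₁`,
and it suffices to compare the sorted rearrangement `δ` of `γ ++ β₂` with `b :: β₂`.
Reading both lists from the front, `δ` agrees with `b :: β₂` for as long as it keeps
producing copies of `b` taken from `β₂`; since `b :: β₂` holds one more copy of `b` than
`γ ++ β₂`, at the first position where this stops `δ` has either ended or an entry `< b`.
-/

namespace List

variable {α : Type*} [LinearOrder α]

theorem exists_eq_append_of_perm_append {l l₁ l₂ : List α}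
    (hl : l.Pairwise (· ≥ ·)) (hl₁ : l₁.Pairwise (· ≥ ·))
    (hdom : ∀ x ∈ l₁, ∀ y ∈ l₂, x ≥ y) (hperm : l ~ l₁ ++ l₂) :
    ∃ l₂', l = l₁ ++ l₂' ∧ l₂'.Pairwise (· ≥ ·) ∧ l₂' ~ l₂ := by
  refine ⟨l₂.insertionSort (· ≥ ·), ?_, pairwise_insertionSort _ _, perm_insertionSort _ _⟩
  have hsorted : (l₁ ++ l₂.insertionSort (· ≥ ·)).Pairwise (· ≥ ·) :=
    pairwise_append.2 ⟨hl₁, pairwise_insertionSort _ _,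
      fun x hx y hy => hdom x hx y ((mem_insertionSort _).1 hy)⟩
  exact hperm.trans (Perm.append_left l₁ (perm_insertionSort _ _).symm)
    |>.eq_of_pairwise' hl hsorted

theorem lex_lt_cons_of_perm_append {b : α} {γ l δ : List α} (hγ : ∀ x ∈ γ, x < b)
    (hbl : (b :: l).Pairwise (· ≥ ·)) (hδ : δ.Pairwise (· ≥ ·)) (hperm : δ ~ γ ++ l) :
    Lex (· < ·) δ (b :: l) := by
  induction δ generalizing l with
  | nil => exact .nil
  | cons a δ ih =>
    rcases lt_or_ge a b with hab | hba
    · exact .rel hab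
    have ha : a ∈ l :=
      (mem_append.1 (hperm.subset mem_cons_self)).resolve_left fun ha => (hγ a ha).not_ge hba
    obtain ⟨c, l, rfl⟩ : ∃ c l', l = c :: l' := exists_cons_of_ne_nil (ne_nil_of_mem ha)
    obtain rfl : a = b := le_antisymm (rel_of_pairwise_cons hbl ha) hba
    obtain rfl : c = a := le_antisymm (rel_of_pairwise_cons hbl mem_cons_self)
      ((mem_cons.1 ha).elim le_of_eq (rel_of_pairwise_cons hbl.of_cons))
    exact .cons <| ih hbl.of_cons hδ.of_cons (hperm.trans perm_middle).cons_inv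

end List

/-- Replacing an entry `b` of a non-increasing list of naturals by finitely many
entries each strictly less than `b`, and re-sorting into non-increasing order,
strictly decreases the list in the lexicographic order. (The sorted list `α` is
characterized as the non-increasing permutation of `β₁ ++ γ ++ β₂`.) -/
theorem replace_entry_lex_lt (β₁ β₂ γ : List ℕ) (b : ℕ)
    (hβ : (β₁ ++ [b] ++ β₂).Pairwise (· ≥ ·))
    (hγ : ∀ x ∈ γ, x < b)
    (α : List ℕ) (hα : α.Pairwise (· ≥ ·)) (hperm : α.Perm (β₁ ++ γ ++ β₂)) :
    List.Lex (· < ·) α (β₁ ++ [b] ++ β₂) := by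
  simp only [List.append_assoc, List.singleton_append] at hβ hperm ⊢
  obtain ⟨hβ₁, hbβ₂, hβ₁_ge⟩ := List.pairwise_append.1 hβ
  have hdom : ∀ x ∈ β₁, ∀ y ∈ γ ++ β₂, x ≥ y := by
    intro x hx y hy
    rcases List.mem_append.1 hy with hy | hy
    · exact ((hγ y hy).trans_le (hβ₁_ge x hx b List.mem_cons_self)).le
    · exact hβ₁_ge x hx y (List.mem_cons_of_mem b hy)
  obtain ⟨δ, rfl, hδ, hδperm⟩ := List.exists_eq_append_of_perm_append hα hβ₁ hdom hperm
  exact (List.lex_lt_cons_of_perm_append hγ hbβ₂ hδ hδperm).append_left _ β₁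
end
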